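/- For every permutation π, the forward-march sorting distance satisfies ⌈b′(π)/3⌉ ≤ d′(π) ≤ b′(π); i.e., π can be transformed into the identity permutation by at most b′(π) forward-march operations, and every such sorting sequence has length at least ⌈b′(π)/3⌉. (This shows that the algorithm SortByRTwFM3 is a 3-approximation.) -/

import Mathlib

/-- A permutation on `n` elements: a list `[π₀, π₁, …, π_{n+1}]` of distinct
naturals that is a rearrangement of `0, 1, …, n+1` with `π₀ = 0` and
`π_{n+1} = n+1`. -/
def IsPerm (n : ℕ) (π : List ℕ) : Prop :=
  π.Perm (List.range (n + 2)) ∧ π.getD 0 0 = 0 ∧ π.getD (n + 1) 0 = n + 1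

/-- Breakpoint count `b(π)`: `1` plus the number of indices `i` with
`2 ≤ i ≤ n+1` and `|π_i − π_{i−1}| ≠ 1` (these are exactly the consecutive
pairs of the tail `π₁, …, π_{n+1}`). -/
def bp (π : List ℕ) : ℕ :=
  1 + ((π.drop 1).zip (π.drop 2)).countP
        (fun p => !(p.1 + 1 == p.2 || p.2 + 1 == p.1))

/-- Redefined breakpoint count `b′(π)`: the number of indices `i` with
`1 ≤ i ≤ n+1` and `|π_i − π_{i−1}| ≠ 1`. -/
def bp' (π : List ℕ) : ℕ :=
  (π.zip (π.drop 1)).countP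
    (fun p => !(p.1 + 1 == p.2 || p.2 + 1 == p.1))

/-- Prefix reversal `β(1,j)`: `[π₀, π_{j−1}, …, π₁, π_j, …, π_{n+1}]`. -/
def prefixReversal (π : List ℕ) (j : ℕ) : List ℕ :=
  π.take 1 ++ ((π.drop 1).take (j - 1)).reverse ++ π.drop j

/-- Prefix transposition `τ(1,j,k)`:
`[π₀, π_j, …, π_{k−1}, π₁, …, π_{j−1}, π_k, …, π_{n+1}]`. -/
def prefixTransposition (π : List ℕ) (j k : ℕ) : List ℕ :=
  π.take 1 ++ (π.drop j).take (k - j) ++ (π.drop 1).take (j - 1) ++ π.drop k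

/-- Prefix transreversal `βτ(1,j,k)`:
`[π₀, π_j, …, π_{k−1}, π_{j−1}, …, π₁, π_k, …, π_{n+1}]`. -/
def prefixTransreversal (π : List ℕ) (j k : ℕ) : List ℕ :=
  π.take 1 ++ (π.drop j).take (k - j) ++ ((π.drop 1).take (j - 1)).reverse ++ π.drop k

/-- A prefix operation: a prefix reversal, a prefix transposition, or a
prefix transreversal. -/
inductive PrefOp
  | rev (j : ℕ)
  | trans (j k : ℕ)
  | transrev (j k : ℕ)

/-- Apply a prefix operation to a permutation. -/
def PrefOp.apply (π : List ℕ) : PrefOp → List ℕ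
  | .rev j => prefixReversal π j
  | .trans j k => prefixTransposition π j k
  | .transrev j k => prefixTransreversal π j k

/-- Validity of a prefix operation on a permutation of `n` elements:
`3 ≤ j ≤ n+1` for a prefix reversal, `2 ≤ j < k ≤ n+1` for a prefix
transposition or a prefix transreversal. -/
def PrefOp.Valid (n : ℕ) : PrefOp → Prop
  | .rev j => 3 ≤ j ∧ j ≤ n + 1
  | .trans j k => 2 ≤ j ∧ j < k ∧ k ≤ n + 1
  | .transrev j k => 2 ≤ j ∧ j < k ∧ k ≤ n + 1

/-- Is the operation a prefix reversal? -/
def PrefOp.isRev : PrefOp → Bool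
  | .rev _ => true
  | _ => false

/-- Is the operation a prefix transreversal? -/
def PrefOp.isTransrev : PrefOp → Bool
  | .transrev _ _ => true
  | _ => false

/-- Apply a sequence of prefix operations, left to right. -/
def applySeq : List ℕ → List PrefOp → List ℕ
  | π, [] => π
  | π, o :: os => applySeq (o.apply π) os

/-- All operations in the sequence are valid for permutations of `n` elements. -/
def ValidSeq (n : ℕ) (ops : List PrefOp) : Prop :=
  ∀ o ∈ ops, o.Valid n

/-- `fm π` is `m(π) + 1`, where `m(π)` is the largest index `m` such that
`π_i = i` for all `0 ≤ i ≤ m`; i.e. the length of the longest already-sorted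
prefix of `π`. -/
def fm (π : List ℕ) : ℕ :=
  ((List.range π.length).takeWhile (fun i => π.getD i 0 == i)).length

/-- Forward-march prefix reversal: reverses the segment
`π_{m(π)+1}, …, π_{j−1}` in place. -/
def fmPrefixReversal (π : List ℕ) (j : ℕ) : List ℕ :=
  π.take (fm π) ++ ((π.drop (fm π)).take (j - fm π)).reverse ++ π.drop j

/-- Forward-march prefix transposition: cuts the segment
`π_{m(π)+1}, …, π_{j−1}` and pastes it between `π_{k−1}` and `π_k`. -/
def fmPrefixTransposition (π : List ℕ) (j k : ℕ) : List ℕ :=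
  π.take (fm π) ++ (π.drop j).take (k - j) ++
    (π.drop (fm π)).take (j - fm π) ++ π.drop k

/-- A forward-march operation: an FM prefix reversal or an FM prefix
transposition. -/
inductive FMOp
  | rev (j : ℕ)
  | trans (j k : ℕ)

/-- Apply a forward-march operation. -/
def FMOp.apply (π : List ℕ) : FMOp → List ℕ
  | .rev j => fmPrefixReversal π j
  | .trans j k => fmPrefixTransposition π j k

/-- Validity of a forward-march operation on a permutation `π` of `n`
elements: `m(π)+3 ≤ j ≤ n+1` for an FM prefix reversal, and
`m(π)+2 ≤ j ≤ n`, `j < k ≤ n+1` for an FM prefix transposition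
(recall `fm π = m(π) + 1`). -/
def FMOp.Valid (n : ℕ) (π : List ℕ) : FMOp → Prop
  | .rev j => fm π + 2 ≤ j ∧ j ≤ n + 1
  | .trans j k => fm π + 1 ≤ j ∧ j ≤ n ∧ j < k ∧ k ≤ n + 1

/-- Is the forward-march operation an FM prefix reversal? -/
def FMOp.isRev : FMOp → Bool
  | .rev _ => true
  | _ => false

/-- Apply a sequence of forward-march operations, left to right. -/
def applyFMSeq : List ℕ → List FMOp → List ℕ
  | π, [] => π
  | π, o :: os => applyFMSeq (o.apply π) os

/-- Validity of a sequence of forward-march operations, where each operation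
must be valid for the permutation obtained after applying the previous ones. -/
def FMValidSeq (n : ℕ) : List ℕ → List FMOp → Prop
  | _, [] => True
  | π, o :: os => o.Valid n π ∧ FMValidSeq n (o.apply π) os

/-!
A forward-march operation cuts the permutation in at most three places and keeps the pieces
intact (one of them possibly reversed), so it changes `b′` by at most `3`; since `b′` of the
identity is `0`, this gives the lower bound.

Conversely, let `0, …, f - 1` be the sorted prefix and `f, f + 1, …, f + t` the maximal
increasing run starting at the position of `f`, so that
`π = [0, …, f - 1] ++ S ++ [f, …, f + t] ++ D` with `S` and `D` nonempty. If `t = 0`, reverse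
`S ++ [f]`; otherwise swap `S` with the run. The reversal destroys the breakpoints
`(f - 1, head S)` and `(f, head D)` and creates at most one; the swap destroys
`(f - 1, head S)`, `(last S, f)` and `(f + t, head D)` and creates at most two. Either way `b′`
drops, so at most `b′(π)` operations sort `π`.
-/

def brk (a b : ℕ) : ℕ := if a + 1 = b ∨ b + 1 = a then 0 else 1

lemma brk_le_one (a b : ℕ) : brk a b ≤ 1 := by
  unfold brk; split <;> omega

lemma brk_comm (a b : ℕ) : brk a b = brk b a := by
  simp only [brk, or_comm]

lemma brk_self_succ (a : ℕ) : brk a (a + 1) = 0 := by simp [brk]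

lemma brk_eq_one {a b : ℕ} (h₁ : a + 1 ≠ b) (h₂ : b + 1 ≠ a) : brk a b = 1 := by
  simp [brk, h₁, h₂]

@[simp] lemma bp'_nil : bp' [] = 0 := rfl

@[simp] lemma bp'_singleton (a : ℕ) : bp' [a] = 0 := rfl

lemma bp'_cons_cons (a b : ℕ) (l : List ℕ) : bp' (a :: b :: l) = brk a b + bp' (b :: l) := by
  simp only [bp', brk, List.drop_one, List.tail_cons, List.zip_cons_cons, List.countP_cons]
  by_cases h : a + 1 = b ∨ b + 1 = a <;> simp_all <;> omega

lemma bp'_append {A B : List ℕ} {a b : ℕ} (hA : A.getLast? = some a) (hB : B.head? = some b) :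
    bp' (A ++ B) = bp' A + brk a b + bp' B := by
  obtain ⟨B, rfl⟩ := List.head?_eq_some_iff.1 hB
  induction A with
  | nil => simp at hA
  | cons x A ih =>
    cases A with
    | nil => simp_all [bp'_cons_cons]
    | cons y A =>
      rw [List.cons_append, List.cons_append, bp'_cons_cons, ← List.cons_append,
        ih (by simpa using hA), bp'_cons_cons]
      omega

lemma bp'_append_le (A B : List ℕ) : bp' (A ++ B) ≤ bp' A + bp' B + 1 := by
  rcases hA : A.getLast? with _ | a
  · simp_all
  rcases hB : B.head? with _ | b
  · simp_all
  rw [bp'_append hA hB]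
  have := brk_le_one a b
  omega

lemma bp'_add_bp'_le (A B : List ℕ) : bp' A + bp' B ≤ bp' (A ++ B) := by
  rcases hA : A.getLast? with _ | a
  · simp_all
  rcases hB : B.head? with _ | b
  · simp_all
  rw [bp'_append hA hB]
  omega

@[simp] lemma bp'_reverse (l : List ℕ) : bp' l.reverse = bp' l := by
  induction l with
  | nil => rfl
  | cons a l ih =>
    rcases l with _ | ⟨b, l⟩
    · rfl
    rw [List.reverse_cons, bp'_append (a := b) (b := a) (by simp) rfl, ih, bp'_cons_cons,
      brk_comm]
    simp; omega

lemma bp'_range' (s m : ℕ) : bp' (List.range' s m) = 0 := by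
  induction m generalizing s with
  | zero => rfl
  | succ m ih =>
    rcases m with _ | m
    · rfl
    rw [List.range'_succ, List.range'_succ, bp'_cons_cons, ← List.range'_succ, brk_self_succ, ih]

lemma bp'_range (m : ℕ) : bp' (List.range m) = 0 := by
  rw [List.range_eq_range', bp'_range']

section Rearrangement

variable {A B C D : List ℕ} {a b₁ b₂ c₁ c₂ d : ℕ}

lemma bp'_append_reverse_append (hA : A.getLast? = some a) (hB₁ : B.head? = some b₁)
    (hB₂ : B.getLast? = some b₂) (hC : C.head? = some c₁) :
    bp' (A ++ B.reverse ++ C) + brk a b₁ + brk b₂ c₁ =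
      bp' (A ++ B ++ C) + brk a b₂ + brk b₁ c₁ := by
  rw [bp'_append (a := b₁) (by simp [hB₁]) hC, bp'_append (b := b₂) hA (by simp [hB₂]),
    bp'_append (a := b₂) (by simp [hB₂]) hC, bp'_append hA hB₁, bp'_reverse]
  omega

lemma bp'_append_swap_append (hA : A.getLast? = some a) (hB₁ : B.head? = some b₁)
    (hB₂ : B.getLast? = some b₂) (hC₁ : C.head? = some c₁) (hC₂ : C.getLast? = some c₂)
    (hD : D.head? = some d) :
    bp' (A ++ C ++ B ++ D) + brk a b₁ + brk b₂ c₁ + brk c₂ d =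
      bp' (A ++ B ++ C ++ D) + brk a c₁ + brk c₂ b₁ + brk b₂ d := by
  rw [bp'_append (a := b₂) (by simp [hB₂]) hD, bp'_append (a := c₂) (by simp [hC₂]) hB₁,
    bp'_append hA hC₁, bp'_append (a := c₂) (by simp [hC₂]) hD,
    bp'_append (a := b₂) (by simp [hB₂]) hC₁, bp'_append hA hB₁]
  omega

end Rearrangement

lemma bp'_le_bp'_append_reverse_append (A B C : List ℕ) :
    bp' (A ++ B ++ C) ≤ bp' (A ++ B.reverse ++ C) + 2 := by
  have := bp'_append_le A B
  have := bp'_append_le (A ++ B) C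
  have := bp'_add_bp'_le A B.reverse
  have := bp'_add_bp'_le (A ++ B.reverse) C
  simp only [bp'_reverse] at *
  omega

lemma bp'_le_bp'_append_swap_append (A B C D : List ℕ) :
    bp' (A ++ B ++ C ++ D) ≤ bp' (A ++ C ++ B ++ D) + 3 := by
  have := bp'_append_le A B
  have := bp'_append_le (A ++ B) C
  have := bp'_append_le (A ++ B ++ C) D
  have := bp'_add_bp'_le A C
  have := bp'_add_bp'_le (A ++ C) B
  have := bp'_add_bp'_le (A ++ C ++ B) D
  omega

lemma take_append_slice_append_drop (l : List ℕ) {i j : ℕ} (h : i ≤ j) :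
    l.take i ++ (l.drop i).take (j - i) ++ l.drop j = l := by
  rw [← List.take_add, Nat.add_sub_cancel' h, List.take_append_drop]

lemma bp'_le_bp'_apply_add_three {n : ℕ} {π : List ℕ} {o : FMOp} (hv : o.Valid n π) :
    bp' π ≤ bp' (o.apply π) + 3 := by
  cases o with
  | rev j =>
    obtain ⟨hj, -⟩ := hv
    have := bp'_le_bp'_append_reverse_append (π.take (fm π)) ((π.drop (fm π)).take (j - fm π))
      (π.drop j)
    rw [take_append_slice_append_drop π (by omega)] at this
    exact this.trans (by simp only [FMOp.apply, fmPrefixReversal]; omega)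
  | trans j k =>
    obtain ⟨hj, -, hjk, -⟩ := hv
    have := bp'_le_bp'_append_swap_append (π.take (fm π)) ((π.drop (fm π)).take (j - fm π))
      ((π.drop j).take (k - j)) (π.drop k)
    have hsuffix : (π.drop j).take (k - j) ++ π.drop k = π.drop j := by
      rw [show π.drop k = (π.drop j).drop (k - j) by
        rw [List.drop_drop, Nat.add_sub_cancel' hjk.le], List.take_append_drop]
    rw [List.append_assoc _ _ (π.drop k), hsuffix, take_append_slice_append_drop π (by omega)]
      at this
    exact this.trans (by simp only [FMOp.apply, fmPrefixTransposition]; omega)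

lemma bp'_le_bp'_applyFMSeq_add {n : ℕ} :
    ∀ {π : List ℕ} {ops : List FMOp}, FMValidSeq n π ops →
      bp' π ≤ bp' (applyFMSeq π ops) + 3 * ops.length
  | _, [], _ => by simp [applyFMSeq]
  | π, o :: ops, ⟨ho, hops⟩ => by
    have := bp'_le_bp'_apply_add_three ho
    have := bp'_le_bp'_applyFMSeq_add hops
    simp only [applyFMSeq, List.length_cons]
    omega

lemma exists_range'_append (a : ℕ) (L : List ℕ) :
    ∃ t R, a :: L = List.range' a (t + 1) ++ R ∧ R.head? ≠ some (a + t + 1) := by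
  induction L generalizing a with
  | nil => exact ⟨0, [], rfl, by simp⟩
  | cons b L ih =>
    by_cases hb : b = a + 1
    · obtain ⟨t, R, hL, hR⟩ := ih b
      refine ⟨t + 1, R, ?_, by rwa [show a + (t + 1) + 1 = b + t + 1 by omega]⟩
      rw [hL, List.range'_succ (s := a) (n := t + 1), hb, List.cons_append]
    · exact ⟨0, b :: L, rfl, by simpa using hb⟩

lemma fm_range_append {f : ℕ} {L : List ℕ} (h : L.head? ≠ some f) :
    fm (List.range f ++ L) = f := by
  have hprefix : ∀ i ∈ List.range f, ((List.range f ++ L).getD i 0 == i) = true := by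
    intro i hi
    rw [List.mem_range] at hi
    simp [List.getElem?_append_left (show i < (List.range f).length by simpa using hi), hi]
  rw [fm, List.length_append, List.length_range, List.range_add,
    List.takeWhile_append_of_pos hprefix, List.length_append, List.length_range]
  rcases L with _ | ⟨x, L⟩
  · simp
  · rw [List.length_cons, List.range_succ_eq_map, List.map_cons, List.takeWhile_cons_of_neg]
    · simp
    · simpa [List.getD_append_right] using h

lemma fmPrefixReversal_append {A B C : List ℕ} (hA : fm (A ++ B ++ C) = A.length) :
    fmPrefixReversal (A ++ B ++ C) (A.length + B.length) = A ++ B.reverse ++ C := by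
  rw [fmPrefixReversal, hA]
  simp [List.drop_append]

lemma fmPrefixTransposition_append {A B C D : List ℕ} (hA : fm (A ++ B ++ C ++ D) = A.length) :
    fmPrefixTransposition (A ++ B ++ C ++ D) (A.length + B.length)
      (A.length + B.length + C.length) = A ++ C ++ B ++ D := by
  rw [fmPrefixTransposition, hA]
  simp [List.drop_append, List.drop_eq_nil_of_le, add_assoc, Nat.add_sub_add_left]

lemma IsPerm.nodup {n : ℕ} {π : List ℕ} (hπ : IsPerm n π) : π.Nodup :=
  hπ.1.nodup_iff.2 List.nodup_range

lemma IsPerm.length_eq {n : ℕ} {π : List ℕ} (hπ : IsPerm n π) : π.length = n + 2 := by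
  simpa using hπ.1.length_eq

lemma IsPerm.getLast?_eq {n : ℕ} {π : List ℕ} (hπ : IsPerm n π) :
    π.getLast? = some (n + 1) := by
  have h := hπ.2.2
  rw [List.getD_eq_getElem _ _ (by rw [hπ.length_eq]; omega)] at h
  rw [List.getLast?_eq_getElem?, hπ.length_eq, show n + 2 - 1 = n + 1 by omega,
    List.getElem?_eq_getElem (by rw [hπ.length_eq]; omega), h]

lemma IsPerm.of_perm_middle {n : ℕ} {A B B' C : List ℕ} (hπ : IsPerm n (A ++ B ++ C))
    (hA : A ≠ []) (hC : C ≠ []) (hB : B'.Perm B) : IsPerm n (A ++ B' ++ C) := by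
  have hlen := hπ.length_eq
  obtain ⟨hperm, h0, hlast⟩ := hπ
  have hBlen := hB.length_eq
  have hApos : 0 < A.length := List.length_pos_iff.2 hA
  have hCpos : 0 < C.length := List.length_pos_iff.2 hC
  simp only [List.length_append] at hlen
  refine ⟨?_, ?_, ?_⟩
  · simpa using ((hB.append_right C).append_left A).trans (by simpa using hperm)
  · rwa [List.append_assoc, List.getD_append _ _ _ _ hApos,
      ← List.getD_append _ (B ++ C) _ _ hApos,
      ← List.append_assoc]
  · rwa [List.getD_append_right _ _ _ _ (by simp; omega), List.length_append, hBlen,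
      ← List.length_append, ← List.getD_append_right _ _ _ _ (by simp; omega)]

lemma IsPerm.exists_eq_range_append {n : ℕ} {π : List ℕ} (hπ : IsPerm n π)
    (hne : π ≠ List.range (n + 2)) :
    ∃ f t S D, 0 < f ∧ S ≠ [] ∧ D ≠ [] ∧ D.head? ≠ some (f + t + 1) ∧ fm π = f ∧
      π = List.range f ++ S ++ List.range' f (t + 1) ++ D := by
  obtain ⟨L, hL⟩ : ∃ L, π = 0 :: L := by
    rcases hπ' : π with _ | ⟨x, L⟩
    · simpa [hπ'] using hπ.length_eq
    · exact ⟨L, by simpa [hπ'] using hπ.2.1⟩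
  obtain ⟨r, R, hLR, hR⟩ := exists_range'_append 0 L
  rw [← List.range_eq_range'] at hLR
  rw [zero_add] at hR
  obtain ⟨f, hf, hπR, hR⟩ : ∃ f, 0 < f ∧ π = List.range f ++ R ∧ R.head? ≠ some f :=
    ⟨r + 1, r.succ_pos, hL.trans hLR, hR⟩
  have hlen := hπ.length_eq
  rw [hπR, List.length_append, List.length_range] at hlen
  have hfR : f ∈ R := by
    have hRne : R ≠ [] := by
      rintro rfl
      exact hne (by simpa [← hlen] using hπR)
    have := List.length_pos_iff.2 hRne
    have hfπ : f ∈ π := hπ.1.mem_iff.2 (List.mem_range.2 (by omega))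
    simpa [hπR] using hfπ
  obtain ⟨S, C, rfl⟩ := List.append_of_mem hfR
  have hS : S ≠ [] := by
    rintro rfl
    simp at hR
  obtain ⟨t, D, hCD, hD⟩ := exists_range'_append f C
  refine ⟨f, t, S, D, hf, hS, ?_, hD, hπR ▸ fm_range_append hR, by simp [hπR, hCD]⟩
  -- otherwise `π` ends in `f + t = n + 1`, and the length count leaves no room for `S`
  rintro rfl
  have hlast := hπ.getLast?_eq
  rw [hπR, ← List.append_assoc, hCD, List.append_nil, List.getLast?_append,
    List.getLast?_range'] at hlast
  have := List.length_pos_iff.2 hS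
  simp [hCD] at hlast hlen
  omega

section Step

variable {n f v s : ℕ} {π S D : List ℕ}

lemma IsPerm.exists_rev_bp'_lt (hπ : IsPerm n π) (hπeq : π = List.range f ++ (S ++ [f]) ++ D)
    (hfm : fm π = f) (hf : 0 < f) (hv : S.head? = some v) (hs : D.head? = some s)
    (hfv : brk (f - 1) v = 1) (hfs : brk f s = 1) :
    ∃ o : FMOp, o.Valid n π ∧ IsPerm n (o.apply π) ∧ bp' (o.apply π) < bp' π := by
  subst hπeq
  have hlen := hπ.length_eq
  have hSpos : 0 < S.length := List.length_pos_iff.2 (by rintro rfl; simp at hv)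
  have hD : D ≠ [] := by rintro rfl; simp at hs
  have hDpos : 0 < D.length := List.length_pos_iff.2 hD
  simp only [List.length_append, List.length_range, List.length_singleton] at hlen
  have happly := fmPrefixReversal_append (by rwa [List.length_range])
  refine ⟨.rev ((List.range f).length + (S ++ [f]).length), ?_, ?_, ?_⟩
  · simp only [FMOp.Valid, hfm, List.length_append, List.length_range, List.length_singleton]
    omega
  · rw [FMOp.apply, happly]
    exact hπ.of_perm_middle (by simpa using hf.ne') hD (List.reverse_perm _)
  · rw [FMOp.apply, happly]
    have key := bp'_append_reverse_append (A := List.range f) (B := S ++ [f])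
      (a := f - 1) (b₁ := v) (b₂ := f) (by simp [List.getLast?_range, hf.ne']) (by simp [hv])
      (by simp) hs
    have hff : brk (f - 1) f = 0 := by simpa [Nat.sub_add_cancel hf] using brk_self_succ (f - 1)
    have := brk_le_one v s
    omega

lemma IsPerm.exists_trans_bp'_lt {t u : ℕ} (hπ : IsPerm n π)
    (hπeq : π = List.range f ++ S ++ List.range' f (t + 1) ++ D) (hfm : fm π = f) (hf : 0 < f)
    (hv : S.head? = some v) (hu : S.getLast? = some u) (hs : D.head? = some s)
    (hfv : brk (f - 1) v = 1) (huf : brk u f = 1) (hts : brk (f + t) s = 1) :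
    ∃ o : FMOp, o.Valid n π ∧ IsPerm n (o.apply π) ∧ bp' (o.apply π) < bp' π := by
  subst hπeq
  have hlen := hπ.length_eq
  have hSpos : 0 < S.length := List.length_pos_iff.2 (by rintro rfl; simp at hv)
  have hD : D ≠ [] := by rintro rfl; simp at hs
  have hDpos : 0 < D.length := List.length_pos_iff.2 hD
  simp only [List.length_append, List.length_range, List.length_range'] at hlen
  have happly := fmPrefixTransposition_append (by rwa [List.length_range])
  refine ⟨.trans ((List.range f).length + S.length)
    ((List.range f).length + S.length + (List.range' f (t + 1)).length), ?_, ?_, ?_⟩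
  · simp only [FMOp.Valid, hfm, List.length_range, List.length_range']
    omega
  · rw [FMOp.apply, happly, List.append_assoc (List.range f) (List.range' f (t + 1))]
    rw [List.append_assoc (List.range f) S] at hπ
    exact hπ.of_perm_middle (by simpa using hf.ne') hD List.perm_append_comm
  · rw [FMOp.apply, happly]
    have key := bp'_append_swap_append (A := List.range f) (B := S) (C := List.range' f (t + 1))
      (a := f - 1) (c₁ := f) (c₂ := f + t) (by simp [List.getLast?_range, hf.ne']) hv hu
      (by simp [List.range'_succ]) (by simp [List.getLast?_range']) hs
    have hff : brk (f - 1) f = 0 := by simpa [Nat.sub_add_cancel hf] using brk_self_succ (f - 1)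
    have := brk_le_one (f + t) v
    have := brk_le_one u s
    omega

end Step

lemma IsPerm.exists_fmOp_bp'_lt {n : ℕ} {π : List ℕ} (hπ : IsPerm n π)
    (hne : π ≠ List.range (n + 2)) :
    ∃ o : FMOp, o.Valid n π ∧ IsPerm n (o.apply π) ∧ bp' (o.apply π) < bp' π := by
  obtain ⟨f, t, S, D, hf, hS, hD, hDf, hfm, hπeq⟩ := hπ.exists_eq_range_append hne
  obtain ⟨v, hv⟩ := Option.ne_none_iff_exists'.1 (mt List.head?_eq_none_iff.1 hS)
  obtain ⟨u, hu⟩ := Option.ne_none_iff_exists'.1 (mt List.getLast?_eq_none_iff.1 hS)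
  obtain ⟨s, hs⟩ := Option.ne_none_iff_exists'.1 (mt List.head?_eq_none_iff.1 hD)
  have hnd := hπeq ▸ hπ.nodup
  simp only [List.nodup_append, List.mem_append, List.mem_range, List.mem_range'_1] at hnd
  obtain ⟨⟨⟨-, -, hS_range⟩, -, hS_run⟩, -, hD_rest⟩ := hnd
  have hvS := List.mem_of_mem_head? hv
  have huS := List.mem_of_getLast? hu
  have hsD := List.mem_of_mem_head? hs
  have hfv : f ≤ v := by by_contra! h; exact hS_range v h v hvS rfl
  have hfu : f ≤ u := by by_contra! h; exact hS_range u h u huS rfl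
  have hfs : f ≤ s := by by_contra! h; exact hD_rest s (.inl (.inl h)) s hsD rfl
  have hs_run : ¬ s ≤ f + t := fun h => hD_rest s (.inr ⟨hfs, by omega⟩) s hsD rfl
  have hbrk_fv : brk (f - 1) v = 1 :=
    brk_eq_one (fun h => hS_run v (.inr hvS) v ⟨by omega, by omega⟩ rfl) (by omega)
  rcases t with _ | t
  · exact hπ.exists_rev_bp'_lt (hπeq.trans (by simp)) hfm hf hv hs hbrk_fv
      (brk_eq_one (fun h => hDf (h ▸ hs)) (by omega))
  · apply hπ.exists_trans_bp'_lt hπeq hfm hf hv hu hs hbrk_fv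
    · exact brk_eq_one (by omega) (fun h => hS_run u (.inr huS) u ⟨by omega, by omega⟩ rfl)
    · exact brk_eq_one (fun h => hDf (h ▸ hs)) (by omega)

lemma IsPerm.exists_fmSort_length_le_bp' {n : ℕ} {π : List ℕ} (hπ : IsPerm n π) :
    ∃ ops : List FMOp, FMValidSeq n π ops ∧ applyFMSeq π ops = List.range (n + 2) ∧
      ops.length ≤ bp' π := by
  induction hb : bp' π using Nat.strong_induction_on generalizing π with
  | _ b ih =>
    by_cases hid : π = List.range (n + 2)
    · exact ⟨[], trivial, hid, by simp⟩
    obtain ⟨o, ho, hπo, hlt⟩ := hπ.exists_fmOp_bp'_lt hid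
    obtain ⟨ops, hval, hsort, hlen⟩ := ih _ (hb ▸ hlt) hπo rfl
    exact ⟨o :: ops, ⟨ho, hval⟩, hsort, by simp only [List.length_cons]; omega⟩

/-- `⌈b′(π)/3⌉ ≤ d′(π) ≤ b′(π)` for the forward-march sorting
distance. -/
theorem sortFM_bounds
    (n : ℕ) (π : List ℕ) (hπ : IsPerm n π) :
    (∀ ops : List FMOp, FMValidSeq n π ops →
        applyFMSeq π ops = List.range (n + 2) → (bp' π + 2) / 3 ≤ ops.length) ∧
    (∃ ops : List FMOp, FMValidSeq n π ops ∧
        applyFMSeq π ops = List.range (n + 2) ∧ ops.length ≤ bp' π) := by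
  refine ⟨fun ops hval hsort => ?_, hπ.exists_fmSort_length_le_bp'⟩
  have := bp'_le_bp'_applyFMSeq_add hval
  rw [hsort, bp'_range] at this
  omega
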